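/- Let G be a Tanner graph with finite girth g in which every variable node has degree at least d ≥ 2 and every check node has degree k, let εk be an integer with 2 ≤ εk ≤ k, and set x = εk − 1 ≥ 1. Let p be a nonzero nonnegative real vector such that for every check node u and every variable node v_i ∈ N(u), (εk)·p_i ≤ Σ_{v_j ∈ N(u)} p_j (these inequalities hold for every pseudocodeword when the check nodes represent constraints of a [k,k′,εk] linear subcode). If g ≡ 2 (mod 4), then both w_BSC(p) and w_AWGN(p) are at least 1 + Σ_{i=0}^{(g−6)/4} d(d−1)^i x^{i+1}. If g ≡ 0 (mod 4), then both w_BSC(p) and w_AWGN(p) are at least 1 + Σ_{i=0}^{(g−8)/4} d(d−1)^i x^{i+1} + (d−1)^{(g−4)/4} x^{g/4} (empty sums being 0). -/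

import Mathlib

/-- A Tanner graph with `n` variable nodes and `m` check nodes, given by the
neighborhood `N u` (the set of variable nodes adjacent to check node `u`). -/
structure TannerGraph (n m : ℕ) where
  N : Fin m → Finset (Fin n)

/-- The underlying bipartite simple graph of a Tanner graph, on vertex set
`Fin n ⊕ Fin m` (variable nodes on the left, check nodes on the right). -/
def TannerGraph.graph {n m : ℕ} (G : TannerGraph n m) : SimpleGraph (Fin n ⊕ Fin m) :=
  SimpleGraph.fromRel (fun a b =>
    match a, b with
    | Sum.inl i, Sum.inr j => i ∈ G.N j
    | _, _ => False)

/-- The degree of variable node `i` in the Tanner graph. -/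
def TannerGraph.varDeg {n m : ℕ} (G : TannerGraph n m) (i : Fin n) : ℕ :=
  (Finset.univ.filter (fun j : Fin m => i ∈ G.N j)).card

/-- AWGN pseudocodeword weight. -/
noncomputable def wAWGN {n : ℕ} (p : Fin n → ℝ) : ℝ :=
  (∑ i, p i) ^ 2 / (∑ i, (p i) ^ 2)

/-- The sum of the `e` largest components of `p` (for nonnegative `p`),
expressed as the largest sum over sets of `e` coordinates. -/
noncomputable def maxSum {n : ℕ} (p : Fin n → ℝ) (e : ℕ) : ℝ :=
  sSup ((fun S : Finset (Fin n) => ∑ i ∈ S, p i) '' {S | S.card = e})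

/-- The smallest number `e` such that the sum of the `e` largest components of `p`
is at least half of the total sum. -/
noncomputable def eBSC {n : ℕ} (p : Fin n → ℝ) : ℕ :=
  sInf {e : ℕ | (∑ i, p i) / 2 ≤ maxSum p e}

/-- BSC pseudocodeword weight. -/
noncomputable def wBSC {n : ℕ} (p : Fin n → ℝ) : ℝ :=
  if maxSum p (eBSC p) = (∑ i, p i) / 2 then 2 * (eBSC p : ℝ) else 2 * (eBSC p : ℝ) - 1

/-!
Let `p` be maximal at the variable node `r` and unroll the Tanner graph from `r` into its
computation tree. Every variable node of the tree has at least `d - 1` child checks, and the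
other variable nodes of such a check `u` below `v` weigh `Σ_{N(u)} p - p_v ≥ (εk - 1) p_v`; so the
variable nodes at depth `2i` weigh at least `d (d - 1)^(i-1) (εk - 1)^i p_r` together.
Two distinct non-backtracking walks ending at the same node close a cycle no longer than their
total length, so for `4t < g` the tree nodes up to depth `2t` are distinct nodes of the graph,
and `Σ p ≥ T p_r` for the tree bound `T`; for `g ≡ 0 (mod 4)` one more level of a single branch
fits. Finally `w_AWGN(p) ≥ Σ p / p_r` and, `T` being an integer, `w_BSC(p) ≥ T`.
-/
open Finset SimpleGraph

namespace SimpleGraph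

variable {V : Type*} {G : SimpleGraph V} {u v : V}

lemma natCast_lt_egirth {L : ℕ} (h : L < max G.girth 3) : (L : ℕ∞) < G.egirth := by
  rcases lt_max_iff.1 h with h | h
  · exact (Nat.cast_lt.2 h).trans_le (ENat.natCast_toNat_le_self _)
  · exact (Nat.cast_lt.2 h).trans_le G.three_le_egirth

theorem egirth_le_length_add_length_of_isChain {p q : G.Walk u v}
    (hp : p.edges.IsChain (· ≠ ·)) (hq : q.edges.IsChain (· ≠ ·)) (hpq : p ≠ q) :
    G.egirth ≤ p.length + q.length := by
  classical
  -- The union `H` of `p` and `q` has a cycle, as in a forest non-backtracking walks are paths,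
  -- which are unique; that cycle has at most `p.length + q.length` edges.
  let H := fromEdgeSet {e | e ∈ p.edges ++ q.edges}
  have hG : ∀ e ∈ p.edges ++ q.edges, e ∈ G.edgeSet := by
    simp only [List.mem_append]
    rintro e (he | he)
    exacts [p.edges_subset_edgeSet he, q.edges_subset_edgeSet he]
  have hH : ∀ e ∈ p.edges ++ q.edges, e ∈ H.edgeSet := fun e he => by
    rw [edgeSet_fromEdgeSet]
    exact ⟨he, G.not_isDiag_of_mem_edgeSet (hG e he)⟩
  have hHG : H ≤ G := fun x y hxy => by
    rw [fromEdgeSet_adj] at hxy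
    exact hG _ hxy.1
  have hcyc : ¬ H.IsAcyclic := by
    intro hacyc
    have hpath : ∀ {w : G.Walk u v} (hw : ∀ e ∈ w.edges, e ∈ H.edgeSet),
        w.edges.IsChain (· ≠ ·) → (w.transfer H hw).IsPath := fun hw hc =>
      (hacyc.isPath_iff_isChain _).2 (by rwa [Walk.edges_transfer])
    have := (hacyc.subsingleton_path u v).elim
      ⟨_, hpath (fun e he => hH e (List.mem_append_left _ he)) hp⟩
      ⟨_, hpath (fun e he => hH e (List.mem_append_right _ he)) hq⟩
    apply hpq
    simpa [Walk.transfer_transfer, Walk.transfer_self] using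
      congrArg (fun w : H.Path u v => (w : H.Walk u v).transfer G
        fun e he => edgeSet_mono hHG (Walk.edges_subset_edgeSet _ he)) this
  obtain ⟨a, c, hc⟩ : ∃ a, ∃ c : H.Walk a a, c.IsCycle := by
    simpa [IsAcyclic] using hcyc
  have hlen : c.length ≤ p.length + q.length := by
    rw [← Walk.length_edges, ← Walk.length_edges, ← Walk.length_edges, ← List.length_append]
    refine (hc.edges_nodup.subperm fun e he => ?_).length_le
    have := c.edges_subset_edgeSet he
    rw [edgeSet_fromEdgeSet] at this
    exact this.1
  calc G.egirth ≤ (c.mapLe hHG).length := egirth_le_length (hc.mapLe hHG)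
    _ ≤ p.length + q.length := by rw [Walk.length_map]; exact_mod_cast hlen

@[simp] lemma Walk.penultimate_copy {u' v' : V} (p : G.Walk u v) (hu : u = u') (hv : v = v') :
    (p.copy hu hv).penultimate = p.penultimate := by
  subst hu hv
  rfl

theorem egirth_le_length_add_length_sub_two_of_penultimate_eq {p q : G.Walk u v}
    (hp : p.edges.IsChain (· ≠ ·)) (hq : q.edges.IsChain (· ≠ ·)) (hpq : p ≠ q)
    (hp₀ : ¬ p.Nil) (hq₀ : ¬ q.Nil) (hpen : p.penultimate = q.penultimate) :
    G.egirth ≤ (p.length + q.length - 2 : ℕ) := by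
  have hne : p.dropLast.copy rfl hpen ≠ q.dropLast := fun h => hpq <| Walk.ext_support <| by
    rw [← Walk.support_dropLast_concat hp₀, ← Walk.support_dropLast_concat hq₀, ← h,
      Walk.support_copy]
  have := egirth_le_length_add_length_of_isChain (by simpa using hp.dropLast)
    (by simpa using hq.dropLast) hne
  have hlp := Walk.length_dropLast_add_one hp₀
  have hlq := Walk.length_dropLast_add_one hq₀
  rw [Walk.length_copy] at this
  exact this.trans_eq (by norm_cast; omega)

end SimpleGraph

namespace TannerGraph

variable {n m : ℕ} (G : TannerGraph n m)

lemma graph_adj_inl_inr {i : Fin n} {j : Fin m} :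
    G.graph.Adj (.inl i) (.inr j) ↔ i ∈ G.N j := by
  simp [TannerGraph.graph]

/- A non-backtracking walk in the Tanner graph starting at the variable node `r` is encoded by
its list of (check, variable) steps, the latest step first. `endVar` is reducible so that the
endpoints of `toWalk` unify with the step data. -/
abbrev endVar (r : Fin n) : List (Fin m × Fin n) → Fin n
  | [] => r
  | e :: _ => e.2

def nextChecks (r : Fin n) (l : List (Fin m × Fin n)) : Finset (Fin m) :=
  {j | endVar r l ∈ G.N j ∧ ∀ e ∈ l.head?, j ≠ e.1}

def children (r : Fin n) (l : List (Fin m × Fin n)) : Finset (Fin m × Fin n) :=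
  {e | e.1 ∈ G.nextChecks r l ∧ e.2 ∈ (G.N e.1).erase (endVar r l)}

def IsNonbacktracking (r : Fin n) : List (Fin m × Fin n) → Prop
  | [] => True
  | e :: l => e ∈ G.children r l ∧ IsNonbacktracking r l

def grow (r : Fin n) (A : Finset (List (Fin m × Fin n))) : Finset (List (Fin m × Fin n)) :=
  A.biUnion fun l => (G.children r l).image (· :: l)

/- `level r s` holds the walks to the depth-`2s` variable nodes of the computation tree rooted
at `r`; `branchLevel r j s` those to the depth-`2s + 2` ones below the check `j`. -/
def level (r : Fin n) (s : ℕ) : Finset (List (Fin m × Fin n)) := (G.grow r)^[s] {[]}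

def firstSteps (r : Fin n) (j : Fin m) : Finset (List (Fin m × Fin n)) :=
  ((G.N j).erase r).image fun w => [(j, w)]

def branchLevel (r : Fin n) (j : Fin m) (s : ℕ) : Finset (List (Fin m × Fin n)) :=
  (G.grow r)^[s] (G.firstSteps r j)

variable {G} {r : Fin n}

lemma mem_nextChecks {l : List (Fin m × Fin n)} {j : Fin m} :
    j ∈ G.nextChecks r l ↔ endVar r l ∈ G.N j ∧ ∀ e ∈ l.head?, j ≠ e.1 := by
  simp [nextChecks]

lemma mem_children {l : List (Fin m × Fin n)} {e : Fin m × Fin n} :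
    e ∈ G.children r l ↔ e.1 ∈ G.nextChecks r l ∧ e.2 ∈ (G.N e.1).erase (endVar r l) := by
  simp [children]

lemma card_nextChecks_nil : #(G.nextChecks r []) = G.varDeg r := by
  simp [nextChecks, varDeg, endVar]

lemma varDeg_endVar_le_card_nextChecks_add_one (l : List (Fin m × Fin n)) :
    G.varDeg (endVar r l) ≤ #(G.nextChecks r l) + 1 := by
  cases l with
  | nil => simp [card_nextChecks_nil, endVar]
  | cons e l =>
    refine (card_le_card fun j hj => ?_).trans (card_insert_le e.1 _)
    rw [mem_filter] at hj
    rw [mem_insert, mem_nextChecks]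
    by_cases hje : j = e.1
    · exact .inl hje
    · exact .inr ⟨hj.2, by simpa using hje⟩

lemma sub_one_le_card_nextChecks {d : ℕ} (hdeg : ∀ i, d ≤ G.varDeg i)
    (l : List (Fin m × Fin n)) :
    (d : ℝ) - 1 ≤ #(G.nextChecks r l) := by
  rw [sub_le_iff_le_add]
  exact_mod_cast (hdeg _).trans (varDeg_endVar_le_card_nextChecks_add_one l)

lemma sum_grow (A : Finset (List (Fin m × Fin n))) (f : List (Fin m × Fin n) → ℝ) :
    ∑ l ∈ G.grow r A, f l = ∑ l ∈ A, ∑ e ∈ G.children r l, f (e :: l) := by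
  rw [grow, sum_biUnion]
  · exact sum_congr rfl fun l _ => sum_image fun _ _ _ _ h => (List.cons.inj h).1
  · intro l₁ _ l₂ _ hne
    simp only [Function.onFun, Finset.disjoint_left, mem_image]
    rintro _ ⟨e₁, _, rfl⟩ ⟨e₂, _, h⟩
    exact hne (List.cons.inj h).2.symm

lemma sum_children (l : List (Fin m × Fin n)) (p : Fin n → ℝ) :
    ∑ e ∈ G.children r l, p e.2
      = ∑ j ∈ G.nextChecks r l, ∑ w ∈ (G.N j).erase (endVar r l), p w :=
  sum_finset_product _ _ _ fun _ => mem_children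

section Growth

variable {p : Fin n → ℝ} {κ : ℝ}
  (hcone : ∀ j, ∀ i ∈ G.N j, κ * p i ≤ ∑ w ∈ G.N j, p w)
include hcone

lemma card_nextChecks_mul_le_sum_children (l : List (Fin m × Fin n)) :
    #(G.nextChecks r l) * (κ - 1) * p (endVar r l) ≤ ∑ e ∈ G.children r l, p e.2 := by
  rw [sum_children, mul_assoc, ← nsmul_eq_mul]
  refine card_nsmul_le_sum _ _ _ fun j hj => ?_
  have hv := (mem_nextChecks.1 hj).1
  rw [sum_erase_eq_sub hv]
  linarith [hcone j _ hv]

lemma mul_le_sum_firstSteps {j : Fin m} (hj : r ∈ G.N j) :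
    (κ - 1) * p r ≤ ∑ l ∈ G.firstSteps r j, p (endVar r l) := by
  rw [firstSteps, sum_image fun _ _ _ _ h => by simpa using h]
  rw [sum_erase_eq_sub hj]
  linarith [hcone j r hj]

variable (hp0 : ∀ i, 0 ≤ p i) (hκ : 1 ≤ κ)
include hp0 hκ

lemma mul_sum_le_sum_grow {c : ℝ} {A : Finset (List (Fin m × Fin n))}
    (hc : ∀ l ∈ A, c ≤ #(G.nextChecks r l)) :
    c * (κ - 1) * ∑ l ∈ A, p (endVar r l) ≤ ∑ l ∈ G.grow r A, p (endVar r l) := by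
  rw [sum_grow, mul_sum]
  refine sum_le_sum fun l hl => ?_
  have hweight : 0 ≤ (κ - 1) * p (endVar r l) := mul_nonneg (by linarith) (hp0 _)
  calc c * (κ - 1) * p (endVar r l) ≤ #(G.nextChecks r l) * (κ - 1) * p (endVar r l) := by
        rw [mul_assoc, mul_assoc]; exact mul_le_mul_of_nonneg_right (hc l hl) hweight
    _ ≤ _ := card_nextChecks_mul_le_sum_children hcone l

lemma pow_mul_sum_le_sum_iterate_grow {c : ℝ} (hc0 : 0 ≤ c)
    (hc : ∀ l, c ≤ #(G.nextChecks r l)) (A : Finset (List (Fin m × Fin n))) (s : ℕ) :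
    (c * (κ - 1)) ^ s * ∑ l ∈ A, p (endVar r l)
      ≤ ∑ l ∈ (G.grow r)^[s] A, p (endVar r l) := by
  induction s with
  | zero => simp
  | succ s ih =>
    rw [Function.iterate_succ_apply', pow_succ', mul_assoc]
    exact (mul_le_mul_of_nonneg_left ih (mul_nonneg hc0 (by linarith))).trans
      (mul_sum_le_sum_grow hcone hp0 hκ fun l _ => hc l)

variable {d : ℕ} (hd : 1 ≤ d) (hdeg : ∀ i, d ≤ G.varDeg i)
include hd hdeg

lemma mul_le_sum_level_succ (s : ℕ) :
    d * ((d : ℝ) - 1) ^ s * (κ - 1) ^ (s + 1) * p r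
      ≤ ∑ l ∈ G.level r (s + 1), p (endVar r l) := by
  have hd0 : (0 : ℝ) ≤ d - 1 := sub_nonneg.2 (by exact_mod_cast hd)
  have hlevel1 : d * (κ - 1) * p r ≤ ∑ l ∈ G.level r 1, p (endVar r l) := by
    simpa [level, endVar] using mul_sum_le_sum_grow hcone hp0 hκ (A := {[]}) (c := d) (by
      simpa [card_nextChecks_nil] using hdeg r)
  calc d * ((d : ℝ) - 1) ^ s * (κ - 1) ^ (s + 1) * p r
      = (((d : ℝ) - 1) * (κ - 1)) ^ s * (d * (κ - 1) * p r) := by rw [mul_pow]; ring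
    _ ≤ (((d : ℝ) - 1) * (κ - 1)) ^ s * ∑ l ∈ G.level r 1, p (endVar r l) :=
        mul_le_mul_of_nonneg_left hlevel1 (pow_nonneg (mul_nonneg hd0 (by linarith)) s)
    _ ≤ _ := by
        rw [show G.level r (s + 1) = (G.grow r)^[s] (G.level r 1) from
          Function.iterate_succ_apply _ _ _]
        exact pow_mul_sum_le_sum_iterate_grow hcone hp0 hκ hd0
          (sub_one_le_card_nextChecks hdeg) _ s

lemma mul_le_sum_branchLevel {j : Fin m} (hj : r ∈ G.N j) (s : ℕ) :
    ((d : ℝ) - 1) ^ s * (κ - 1) ^ (s + 1) * p r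
      ≤ ∑ l ∈ G.branchLevel r j s, p (endVar r l) := by
  have hd0 : (0 : ℝ) ≤ d - 1 := sub_nonneg.2 (by exact_mod_cast hd)
  calc ((d : ℝ) - 1) ^ s * (κ - 1) ^ (s + 1) * p r
      = (((d : ℝ) - 1) * (κ - 1)) ^ s * ((κ - 1) * p r) := by rw [mul_pow]; ring
    _ ≤ (((d : ℝ) - 1) * (κ - 1)) ^ s * ∑ l ∈ G.firstSteps r j, p (endVar r l) :=
        mul_le_mul_of_nonneg_left (mul_le_sum_firstSteps hcone hj)
          (pow_nonneg (mul_nonneg hd0 (by linarith)) s)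
    _ ≤ _ := pow_mul_sum_le_sum_iterate_grow hcone hp0 hκ hd0
          (sub_one_le_card_nextChecks hdeg) _ s

end Growth

lemma adj_of_mem_children {l : List (Fin m × Fin n)} {e : Fin m × Fin n}
    (he : e ∈ G.children r l) :
    G.graph.Adj (.inl e.2) (.inr e.1) ∧ G.graph.Adj (.inr e.1) (.inl (endVar r l)) := by
  rw [mem_children, mem_nextChecks, mem_erase] at he
  exact ⟨G.graph_adj_inl_inr.2 he.2.2, (G.graph_adj_inl_inr.2 he.1.1).symm⟩

variable (G r) in
def toWalk : (l : List (Fin m × Fin n)) → G.IsNonbacktracking r l →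
    G.graph.Walk (.inl (endVar r l)) (.inl r)
  | [], _ => .nil
  | _ :: l, h =>
    .cons (adj_of_mem_children h.1).1 (.cons (adj_of_mem_children h.1).2 (toWalk l h.2))

@[simp] lemma length_toWalk (l : List (Fin m × Fin n)) (h : G.IsNonbacktracking r l) :
    (G.toWalk r l h).length = 2 * l.length := by
  induction l with
  | nil => rfl
  | cons e l ih => simp [toWalk, ih h.2]; ring

lemma eq_of_support_toWalk_eq {l₁ l₂ : List (Fin m × Fin n)}
    {h₁ : G.IsNonbacktracking r l₁} {h₂ : G.IsNonbacktracking r l₂}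
    (h : (G.toWalk r l₁ h₁).support = (G.toWalk r l₂ h₂).support) : l₁ = l₂ := by
  induction l₁ generalizing l₂ with
  | nil => cases l₂ <;> simp_all [toWalk]
  | cons e l₁ ih =>
    cases l₂ with
    | nil => simp [toWalk] at h
    | cons e' l₂ =>
      simp only [toWalk, Walk.support_cons, List.cons.injEq, Sum.inl.injEq, Sum.inr.injEq] at h
      rw [ih h.2.2, Prod.ext h.2.1 h.1]

lemma isChain_edges_toWalk (l : List (Fin m × Fin n)) (h : G.IsNonbacktracking r l) :
    (G.toWalk r l h).edges.IsChain (· ≠ ·) := by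
  induction l with
  | nil => simp [toWalk]
  | cons e l ih =>
    have he := mem_children.1 h.1
    simp only [toWalk, Walk.edges_cons]
    refine .cons_cons (fun h' => (mem_erase.1 he.2).1 ?_) ?_
    · simpa using h'
    cases l with
    | nil => simp [toWalk]
    | cons e' l =>
      simp only [toWalk, Walk.edges_cons] at ih ⊢
      refine .cons_cons ?_ (ih h.2)
      simpa [eq_comm] using (mem_nextChecks.1 he.1).2 e' rfl

lemma penultimate_toWalk {l : List (Fin m × Fin n)} (h : G.IsNonbacktracking r l)
    {e : Fin m × Fin n} (hl : l.getLast? = some e) : (G.toWalk r l h).penultimate = .inr e.1 := by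
  induction l with
  | nil => simp at hl
  | cons e' l ih =>
    cases l with
    | nil => simp_all [toWalk]
    | cons e'' l =>
      rw [List.getLast?_cons_cons] at hl
      exact (Walk.penultimate_cons_of_not_nil _ _ Walk.not_nil_cons).trans (ih h.2 hl)

lemma eq_of_endVar_eq {l₁ l₂ : List (Fin m × Fin n)} (h₁ : G.IsNonbacktracking r l₁)
    (h₂ : G.IsNonbacktracking r l₂) (hend : endVar r l₁ = endVar r l₂)
    (hg : ((2 * l₁.length + 2 * l₂.length : ℕ) : ℕ∞) < G.graph.egirth) : l₁ = l₂ := by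
  by_contra hne
  refine hg.not_ge ?_
  have := egirth_le_length_add_length_of_isChain
    (p := (G.toWalk r l₁ h₁).copy (congrArg _ hend) rfl) (q := G.toWalk r l₂ h₂)
    (by simpa using isChain_edges_toWalk l₁ h₁) (isChain_edges_toWalk l₂ h₂)
    (fun h => hne (eq_of_support_toWalk_eq (by simpa using congrArg Walk.support h)))
  simpa using this

lemma not_nil_toWalk {l : List (Fin m × Fin n)} (h : G.IsNonbacktracking r l) (hl : l ≠ []) :
    ¬ (G.toWalk r l h).Nil := by
  rw [Walk.not_nil_iff_lt_length, length_toWalk]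
  have := List.length_pos_iff.2 hl
  omega

lemma eq_of_endVar_eq_of_getLast? {l₁ l₂ : List (Fin m × Fin n)}
    (h₁ : G.IsNonbacktracking r l₁) (h₂ : G.IsNonbacktracking r l₂)
    (hend : endVar r l₁ = endVar r l₂) {e₁ e₂ : Fin m × Fin n} (hl₁ : l₁.getLast? = some e₁)
    (hl₂ : l₂.getLast? = some e₂) (he : e₁.1 = e₂.1)
    (hg : ((2 * l₁.length + 2 * l₂.length - 2 : ℕ) : ℕ∞) < G.graph.egirth) : l₁ = l₂ := by
  by_contra hne
  refine hg.not_ge ?_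
  have := egirth_le_length_add_length_sub_two_of_penultimate_eq
    (p := (G.toWalk r l₁ h₁).copy (congrArg _ hend) rfl) (q := G.toWalk r l₂ h₂)
    (by simpa using isChain_edges_toWalk l₁ h₁) (isChain_edges_toWalk l₂ h₂)
    (fun h => hne (eq_of_support_toWalk_eq (by simpa using congrArg Walk.support h)))
    (by simpa using not_nil_toWalk h₁ (by rintro rfl; simp at hl₁))
    (not_nil_toWalk h₂ (by rintro rfl; simp at hl₂))
    (by rw [Walk.penultimate_copy, penultimate_toWalk h₁ hl₁, penultimate_toWalk h₂ hl₂,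
      he])
  simpa using this

lemma iterate_grow_induction {P : ℕ → List (Fin m × Fin n) → Prop}
    (hP : ∀ s l, P s l → ∀ e ∈ G.children r l, P (s + 1) (e :: l))
    {A : Finset (List (Fin m × Fin n))} (hA : ∀ l ∈ A, P 0 l) (s : ℕ) :
    ∀ l ∈ (G.grow r)^[s] A, P s l := by
  induction s with
  | zero => exact hA
  | succ s ih =>
    rw [Function.iterate_succ_apply']
    intro l hl
    simp only [grow, mem_biUnion, mem_image] at hl
    obtain ⟨l', hl', e, he, rfl⟩ := hl
    exact hP s l' (ih l' hl') e he

lemma isNonbacktracking_of_mem_level {s : ℕ} {l : List (Fin m × Fin n)}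
    (hl : l ∈ G.level r s) :
    G.IsNonbacktracking r l ∧ l.length = s :=
  iterate_grow_induction (P := fun s l => G.IsNonbacktracking r l ∧ l.length = s)
    (fun _ _ h _ he => ⟨⟨he, h.1⟩, by simp [h.2]⟩) (by simp [IsNonbacktracking]) s l hl

lemma isNonbacktracking_of_mem_branchLevel {j : Fin m} (hj : r ∈ G.N j) {s : ℕ}
    {l : List (Fin m × Fin n)} (hl : l ∈ G.branchLevel r j s) :
    G.IsNonbacktracking r l ∧ l.length = s + 1 ∧ ∃ w, l.getLast? = some (j, w) := by
  refine iterate_grow_induction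
    (P := fun s l =>
      G.IsNonbacktracking r l ∧ l.length = s + 1 ∧ ∃ w, l.getLast? = some (j, w))
    (fun _ l h e he => ⟨⟨he, h.1⟩, by simp [h.2.1], ?_⟩) ?_ s l hl
  · obtain ⟨w, hw⟩ := h.2.2
    cases l with
    | nil => simp at hw
    | cons e' l => exact ⟨w, by rw [List.getLast?_cons_cons, hw]⟩
  · simp only [firstSteps, mem_image, mem_erase]
    rintro _ ⟨w, ⟨hwr, hwj⟩, rfl⟩
    exact ⟨⟨by simp [mem_children, mem_nextChecks, hj, hwr, hwj], trivial⟩, rfl, w, rfl⟩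

lemma isNonbacktracking_of_mem_biUnion_level {t : ℕ} {l : List (Fin m × Fin n)}
    (hl : l ∈ (range (t + 1)).biUnion (G.level r)) :
    G.IsNonbacktracking r l ∧ l.length ≤ t := by
  obtain ⟨s, hs, hl⟩ := mem_biUnion.1 hl
  obtain ⟨hw, rfl⟩ := isNonbacktracking_of_mem_level hl
  exact ⟨hw, Nat.lt_succ_iff.1 (mem_range.1 hs)⟩

lemma injOn_endVar_biUnion_level {t : ℕ} (hg : ((4 * t : ℕ) : ℕ∞) < G.graph.egirth) :
    Set.InjOn (endVar r) ((range (t + 1)).biUnion (G.level r) : Set (List (Fin m × Fin n))) :=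
  fun l₁ h₁ l₂ h₂ hend => by
    obtain ⟨hw₁, hlen₁⟩ := isNonbacktracking_of_mem_biUnion_level h₁
    obtain ⟨hw₂, hlen₂⟩ := isNonbacktracking_of_mem_biUnion_level h₂
    exact eq_of_endVar_eq hw₁ hw₂ hend (lt_of_le_of_lt (by norm_cast; omega) hg)

lemma injOn_endVar_biUnion_level_union_branchLevel {t : ℕ} {j : Fin m} (hj : r ∈ G.N j)
    (hg : ((4 * t + 2 : ℕ) : ℕ∞) < G.graph.egirth) :
    Set.InjOn (endVar r)
      (((range (t + 1)).biUnion (G.level r) ∪ G.branchLevel r j t : Finset _) :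
        Set (List (Fin m × Fin n))) := by
  have hB {l} (hl : l ∈ G.branchLevel r j t) : G.IsNonbacktracking r l ∧ l.length ≤ t + 1 :=
    have := isNonbacktracking_of_mem_branchLevel hj hl
    ⟨this.1, this.2.1.le⟩
  intro l₁ h₁ l₂ h₂ hend
  simp only [coe_union, Set.mem_union, mem_coe] at h₁ h₂
  rcases h₁ with h₁ | h₁
  · obtain ⟨hw₁, hlen₁⟩ := isNonbacktracking_of_mem_biUnion_level h₁
    obtain ⟨hw₂, hlen₂⟩ : G.IsNonbacktracking r l₂ ∧ l₂.length ≤ t + 1 := h₂.elim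
      (fun h => (isNonbacktracking_of_mem_biUnion_level h).imp_right (·.trans t.le_succ)) hB
    exact eq_of_endVar_eq hw₁ hw₂ hend (lt_of_le_of_lt (by norm_cast; omega) hg)
  rcases h₂ with h₂ | h₂
  · obtain ⟨hw₁, hlen₁⟩ := hB h₁
    obtain ⟨hw₂, hlen₂⟩ := isNonbacktracking_of_mem_biUnion_level h₂
    exact eq_of_endVar_eq hw₁ hw₂ hend (lt_of_le_of_lt (by norm_cast; omega) hg)
  -- Two walks through the same first check `j` close a cycle two edges shorter.
  obtain ⟨hw₁, hlen₁, w₁, hlast₁⟩ := isNonbacktracking_of_mem_branchLevel hj h₁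
  obtain ⟨hw₂, hlen₂, w₂, hlast₂⟩ := isNonbacktracking_of_mem_branchLevel hj h₂
  exact eq_of_endVar_eq_of_getLast? hw₁ hw₂ hend hlast₁ hlast₂ rfl
    (lt_of_le_of_lt (by norm_cast; omega) hg)

section TreeBound

variable {p : Fin n → ℝ}

lemma sum_endVar_le_sum_of_injOn (hp0 : ∀ i, 0 ≤ p i) {A : Finset (List (Fin m × Fin n))}
    (hA : Set.InjOn (endVar r) (A : Set (List (Fin m × Fin n)))) :
    ∑ l ∈ A, p (endVar r l) ≤ ∑ i, p i := by
  rw [← sum_image hA]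
  exact sum_le_sum_of_subset_of_nonneg (subset_univ _) fun i _ _ => hp0 i

lemma sum_sum_level_eq_sum_biUnion (t : ℕ) :
    ∑ s ∈ range t, ∑ l ∈ G.level r s, p (endVar r l)
      = ∑ l ∈ (range t).biUnion (G.level r), p (endVar r l) := by
  refine (sum_biUnion fun s₁ _ s₂ _ hne =>
    Finset.disjoint_left.2 fun l h₁ h₂ => hne ?_).symm
  rw [← (isNonbacktracking_of_mem_level h₁).2, (isNonbacktracking_of_mem_level h₂).2]

variable {κ : ℝ} (hcone : ∀ j, ∀ i ∈ G.N j, κ * p i ≤ ∑ w ∈ G.N j, p w)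
  (hp0 : ∀ i, 0 ≤ p i) (hκ : 1 ≤ κ) {d : ℕ} (hd : 1 ≤ d)
  (hdeg : ∀ i, d ≤ G.varDeg i)
include hcone hp0 hκ hd hdeg

lemma mul_le_sum_sum_level (t : ℕ) :
    (1 + ∑ i ∈ range t, d * ((d : ℝ) - 1) ^ i * (κ - 1) ^ (i + 1)) * p r
      ≤ ∑ s ∈ range (t + 1), ∑ l ∈ G.level r s, p (endVar r l) := by
  rw [add_mul, one_mul, sum_mul, sum_range_succ', add_comm]
  gcongr with i
  · exact mul_le_sum_level_succ hcone hp0 hκ hd hdeg i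
  · simp [level]

theorem mul_le_sum_of_four_mul_lt_egirth (t : ℕ)
    (hg : ((4 * t : ℕ) : ℕ∞) < G.graph.egirth) :
    (1 + ∑ i ∈ range t, d * ((d : ℝ) - 1) ^ i * (κ - 1) ^ (i + 1)) * p r ≤ ∑ i, p i := by
  refine (mul_le_sum_sum_level hcone hp0 hκ hd hdeg t).trans ?_
  rw [sum_sum_level_eq_sum_biUnion]
  exact sum_endVar_le_sum_of_injOn hp0 (injOn_endVar_biUnion_level hg)

theorem mul_le_sum_of_four_mul_add_two_lt_egirth {j : Fin m} (hj : r ∈ G.N j) (t : ℕ)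
    (hg : ((4 * t + 2 : ℕ) : ℕ∞) < G.graph.egirth) :
    (1 + ∑ i ∈ range t, d * ((d : ℝ) - 1) ^ i * (κ - 1) ^ (i + 1)
      + ((d : ℝ) - 1) ^ t * (κ - 1) ^ (t + 1)) * p r ≤ ∑ i, p i := by
  have hdisj : Disjoint ((range (t + 1)).biUnion (G.level r)) (G.branchLevel r j t) :=
    Finset.disjoint_left.2 fun l hl hlB => by
      have := (isNonbacktracking_of_mem_biUnion_level hl).2
      rw [(isNonbacktracking_of_mem_branchLevel hj hlB).2.1] at this
      omega
  rw [add_mul]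
  calc _ ≤ ∑ s ∈ range (t + 1), ∑ l ∈ G.level r s, p (endVar r l)
          + ∑ l ∈ G.branchLevel r j t, p (endVar r l) :=
        add_le_add (mul_le_sum_sum_level hcone hp0 hκ hd hdeg t)
          (mul_le_sum_branchLevel hcone hp0 hκ hd hdeg hj t)
    _ = ∑ l ∈ (range (t + 1)).biUnion (G.level r) ∪ G.branchLevel r j t, p (endVar r l) := by
        rw [sum_union hdisj, sum_sum_level_eq_sum_biUnion]
    _ ≤ ∑ i, p i :=
        sum_endVar_le_sum_of_injOn hp0 (injOn_endVar_biUnion_level_union_branchLevel hj hg)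

end TreeBound

end TannerGraph

section Weights

variable {n : ℕ} {p : Fin n → ℝ} {i₀ : Fin n}

lemma maxSum_le_mul (hmax : ∀ i, p i ≤ p i₀) (h₀ : 0 ≤ p i₀) (e : ℕ) :
    maxSum p e ≤ e * p i₀ := by
  refine Real.sSup_le ?_ (by positivity)
  rintro _ ⟨S, hS, rfl⟩
  calc ∑ i ∈ S, p i ≤ ∑ _ ∈ S, p i₀ := sum_le_sum fun i _ => hmax i
    _ = e * p i₀ := by rw [sum_const, nsmul_eq_mul, show #S = e from hS]

lemma half_sum_le_maxSum_eBSC (hp0 : ∀ i, 0 ≤ p i) :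
    (∑ i, p i) / 2 ≤ maxSum p (eBSC p) := by
  refine Nat.sInf_mem (s := {e | (∑ i, p i) / 2 ≤ maxSum p e}) ⟨n, ?_⟩
  have hmax : ∑ i, p i ≤ maxSum p n :=
    le_csSup (Set.toFinite _).bddAbove ⟨univ, by simp, rfl⟩
  have : 0 ≤ ∑ i, p i := sum_nonneg fun i _ => hp0 i
  show (∑ i, p i) / 2 ≤ maxSum p n
  linarith

-- `wBSC p` is `2e` or `2e - 1`, so only integer lower bounds `N` transfer.
lemma natCast_le_wBSC (hp0 : ∀ i, 0 ≤ p i) (hmax : ∀ i, p i ≤ p i₀) (hpos : 0 < p i₀)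
    {N : ℕ} (hN : N * p i₀ ≤ ∑ i, p i) : (N : ℝ) ≤ wBSC p := by
  have hhalf := half_sum_le_maxSum_eBSC hp0
  have hup := maxSum_le_mul hmax hpos.le (eBSC p)
  rw [wBSC]
  split_ifs with h
  · exact le_of_mul_le_mul_right (by linarith) hpos
  · have : (N : ℝ) < 2 * eBSC p :=
      lt_of_mul_lt_mul_right (by linarith [lt_of_le_of_ne hhalf (Ne.symm h)]) hpos.le
    have : N < 2 * eBSC p := by exact_mod_cast this
    have : (N : ℝ) + 1 ≤ 2 * eBSC p := by exact_mod_cast this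
    linarith

lemma sum_div_le_wAWGN (hp0 : ∀ i, 0 ≤ p i) (hmax : ∀ i, p i ≤ p i₀) (hpos : 0 < p i₀) :
    (∑ i, p i) / p i₀ ≤ wAWGN p := by
  have hS : 0 ≤ ∑ i, p i := sum_nonneg fun i _ => hp0 i
  have hQ : ∑ i, p i ^ 2 ≤ p i₀ * ∑ i, p i := by
    rw [mul_sum]
    exact sum_le_sum fun i _ => by rw [sq]; exact mul_le_mul_of_nonneg_right (hmax i) (hp0 i)
  have hQpos : 0 < ∑ i, p i ^ 2 :=
    (pow_pos hpos 2).trans_le (single_le_sum (fun i _ => sq_nonneg (p i)) (mem_univ i₀))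
  rw [wAWGN, div_le_div_iff₀ hpos hQpos]
  nlinarith

end Weights

theorem tree_bound_gen_general {n m : ℕ} (G : TannerGraph n m) (g d ek : ℕ)
    (hd : 2 ≤ d) (hdeg : ∀ i : Fin n, d ≤ G.varDeg i)
    (hek2 : 2 ≤ ek)
    (hgirth : G.graph.girth = (g : ℕ∞))
    (p : Fin n → ℝ) (hp0 : ∀ i, 0 ≤ p i) (hpne : p ≠ 0)
    (hcone : ∀ j : Fin m, ∀ i ∈ G.N j, (ek : ℝ) * p i ≤ ∑ l ∈ G.N j, p l) :
    (g % 4 = 2 →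
      1 + ∑ i ∈ Finset.range ((g - 2) / 4),
            (d : ℝ) * ((d : ℝ) - 1) ^ i * ((ek : ℝ) - 1) ^ (i + 1) ≤ wBSC p ∧
      1 + ∑ i ∈ Finset.range ((g - 2) / 4),
            (d : ℝ) * ((d : ℝ) - 1) ^ i * ((ek : ℝ) - 1) ^ (i + 1) ≤ wAWGN p) ∧
    (g % 4 = 0 →
      1 + (∑ i ∈ Finset.range ((g - 4) / 4),
            (d : ℝ) * ((d : ℝ) - 1) ^ i * ((ek : ℝ) - 1) ^ (i + 1))
          + ((d : ℝ) - 1) ^ ((g - 4) / 4) * ((ek : ℝ) - 1) ^ (g / 4) ≤ wBSC p ∧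
      1 + (∑ i ∈ Finset.range ((g - 4) / 4),
            (d : ℝ) * ((d : ℝ) - 1) ^ i * ((ek : ℝ) - 1) ^ (i + 1))
          + ((d : ℝ) - 1) ^ ((g - 4) / 4) * ((ek : ℝ) - 1) ^ (g / 4) ≤ wAWGN p) := by
  obtain ⟨i, hi⟩ := Function.ne_iff.1 hpne
  have : Nonempty (Fin n) := ⟨i⟩
  obtain ⟨i₀, hmax⟩ := Finite.exists_max p
  have hpos : 0 < p i₀ := ((hp0 i).lt_of_ne (Ne.symm hi)).trans_le (hmax i)
  obtain ⟨j₀, hj₀⟩ : ∃ j, i₀ ∈ G.N j := by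
    obtain ⟨j, hj⟩ := card_pos.1 (show 0 < G.varDeg i₀ by linarith [hdeg i₀])
    exact ⟨j, (mem_filter.1 hj).2⟩
  have hweights (N : ℕ) (hN : (N : ℝ) * p i₀ ≤ ∑ i, p i) :
      (N : ℝ) ≤ wBSC p ∧ (N : ℝ) ≤ wAWGN p :=
    ⟨natCast_le_wBSC hp0 hmax hpos hN,
      ((le_div_iff₀ hpos).2 hN).trans (sum_div_le_wAWGN hp0 hmax hpos)⟩
  have hg : G.graph.girth = g := by exact_mod_cast hgirth
  have hκ : (1 : ℝ) ≤ ek := by exact_mod_cast (by omega : 1 ≤ ek)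
  have hodd := G.mul_le_sum_of_four_mul_lt_egirth hcone hp0 hκ (by omega) hdeg (r := i₀)
    ((g - 2) / 4)
  have heven := G.mul_le_sum_of_four_mul_add_two_lt_egirth hcone hp0 hκ (by omega) hdeg hj₀
    ((g - 4) / 4)
  -- Both bounds are casts of natural numbers.
  rw [← Nat.cast_pred (by omega : 0 < d), ← Nat.cast_pred (by omega : 0 < ek)] at hodd heven ⊢
  refine ⟨fun hg4 => ?_, fun hg4 => ?_⟩
  · have := hodd (natCast_lt_egirth (by rw [hg]; omega))
    norm_cast at this ⊢
    exact hweights _ this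
  · have := heven (natCast_lt_egirth (by rw [hg]; omega))
    norm_cast at this ⊢
    refine hweights _ ((mul_le_mul_of_nonneg_right ?_ hpos.le).trans this)
    -- `g / 4 ≤ (g - 4) / 4 + 1`, strictly when `g = 0` (acyclic graph, truncated subtraction).
    gcongr
    · omega
    · omega

theorem tree_bound_gen {n m : ℕ} (G : TannerGraph n m) (g d k ek : ℕ)
    (hd : 2 ≤ d) (hdeg : ∀ i : Fin n, d ≤ G.varDeg i)
    (hreg : ∀ j : Fin m, (G.N j).card = k)
    (hek2 : 2 ≤ ek) (hekk : ek ≤ k)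
    (hgirth : G.graph.girth = (g : ℕ∞))
    (p : Fin n → ℝ) (hp0 : ∀ i, 0 ≤ p i) (hpne : p ≠ 0)
    (hcone : ∀ j : Fin m, ∀ i ∈ G.N j, (ek : ℝ) * p i ≤ ∑ l ∈ G.N j, p l) :
    (g % 4 = 2 →
      1 + ∑ i ∈ Finset.range ((g - 2) / 4),
            (d : ℝ) * ((d : ℝ) - 1) ^ i * ((ek : ℝ) - 1) ^ (i + 1) ≤ wBSC p ∧
      1 + ∑ i ∈ Finset.range ((g - 2) / 4),
            (d : ℝ) * ((d : ℝ) - 1) ^ i * ((ek : ℝ) - 1) ^ (i + 1) ≤ wAWGN p) ∧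
    (g % 4 = 0 →
      1 + (∑ i ∈ Finset.range ((g - 4) / 4),
            (d : ℝ) * ((d : ℝ) - 1) ^ i * ((ek : ℝ) - 1) ^ (i + 1))
          + ((d : ℝ) - 1) ^ ((g - 4) / 4) * ((ek : ℝ) - 1) ^ (g / 4) ≤ wBSC p ∧
      1 + (∑ i ∈ Finset.range ((g - 4) / 4),
            (d : ℝ) * ((d : ℝ) - 1) ^ i * ((ek : ℝ) - 1) ^ (i + 1))
          + ((d : ℝ) - 1) ^ ((g - 4) / 4) * ((ek : ℝ) - 1) ^ (g / 4) ≤ wAWGN p) :=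
  tree_bound_gen_general G g d ek hd hdeg hek2 hgirth p hp0 hpne hcone
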